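/- For every nonnegative integer n and complex number z, the type 2 Euler polynomial equals $E_n(z)=\sum_{k=0}^{n}E_{k,\lambda}(z)S_2(n,k)\lambda^{n-k}$, where $S_2(n,k)$ are the Stirling numbers of the second kind. -/

import Mathlib

/-!
Substituting `t ↦ (e^{λt} - 1)/λ` turns the degenerate exponential `e_λ^x(t)` into `e^{xt}`.
Coefficientwise this is `∑ₖ (x)_{k,λ} S₂(N,k) λ^{N-k} = x^N`; after rescaling to `λ = 1` it is,
for `x = m ≥ N`, the binomial expansion of `e^{mt} = (1 + (e^t - 1))^m`, and it holds for all `x`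
because both sides are polynomials in `x`. The substitution therefore carries the generating
function of `E_{n,λ}` to that of `E_n`, and comparing coefficients gives the theorem.
-/

open PowerSeries Finset Complex

/-- The degenerate falling factorial `(x)_{n,λ} = x(x-λ)⋯(x-(n-1)λ)`. -/
noncomputable def dff (l x : ℂ) (n : ℕ) : ℂ := ∏ j ∈ Finset.range n, (x - j * l)

/-- Exponential generating function of a sequence: `Σ f n * t^n / n!`. -/
noncomputable def egf (f : ℕ → ℂ) : PowerSeries ℂ := PowerSeries.mk fun n => f n / n.factorial

/-- The degenerate exponential `e_λ^x(t) = (1+λt)^{x/λ} = Σ (x)_{n,λ} t^n/n!` as a power series. -/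
noncomputable def degExp (l x : ℂ) : PowerSeries ℂ := egf (dff l x)

/-- The degenerate cosine `cos_λ^{(y)}(t) = cos((y/λ) log(1+λt)) = (e_λ^{iy}(t)+e_λ^{-iy}(t))/2`. -/
noncomputable def degCos (l y : ℂ) : PowerSeries ℂ :=
  (PowerSeries.C : ℂ →+* PowerSeries ℂ) (1/2) * (degExp l (Complex.I * y) + degExp l (-(Complex.I * y)))

/-- The degenerate sine `sin_λ^{(y)}(t) = sin((y/λ) log(1+λt)) = (e_λ^{iy}(t)-e_λ^{-iy}(t))/(2i)`. -/
noncomputable def degSin (l y : ℂ) : PowerSeries ℂ :=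
  (PowerSeries.C : ℂ →+* PowerSeries ℂ) (1/(2*Complex.I)) * (degExp l (Complex.I * y) - degExp l (-(Complex.I * y)))

/-- The exponential series `e^{at} = Σ a^n t^n/n!`. -/
noncomputable def expS (a : ℂ) : PowerSeries ℂ := egf (fun n => a ^ n)

/-- The series of `log(1+t)`. -/
noncomputable def logS : PowerSeries ℂ := PowerSeries.mk fun n => if n = 0 then 0 else (-1)^(n+1) / n

lemma coeff_egf (f : ℕ → ℂ) (n : ℕ) : coeff n (egf f) = f n / n.factorial :=
  coeff_mk _ _

lemma expS_eq_rescale_exp (a : ℂ) : expS a = rescale a (exp ℂ) := by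
  ext n
  simp [expS, egf, coeff_exp, div_eq_mul_inv]

lemma constantCoeff_expS (a : ℂ) : constantCoeff (expS a) = 1 := by
  simp [← coeff_zero_eq_constantCoeff_apply, expS, coeff_egf]

lemma expS_one_pow (m : ℕ) : expS 1 ^ m = expS m := by
  simp only [expS_eq_rescale_exp, rescale_one, RingHom.id_apply, exp_pow_eq_rescale_exp]

lemma rescale_expS_one (a : ℂ) : rescale a (expS 1) = expS a := by
  ext n
  simp [coeff_rescale, expS, egf, div_eq_mul_inv]

lemma X_dvd_expS_sub_one (a : ℂ) : X ∣ expS a - 1 := by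
  simp [X_dvd_iff, constantCoeff_expS]

lemma dff_eq_pow_mul_descPochhammer {l : ℂ} (hl : l ≠ 0) (x : ℂ) (k : ℕ) :
    dff l x k = l ^ k * (descPochhammer ℂ k).eval (x / l) := by
  have hpow : l ^ k = ∏ _j ∈ Finset.range k, l := by simp
  rw [dff, descPochhammer_eval_eq_prod_range, hpow, ← Finset.prod_mul_distrib]
  refine Finset.prod_congr rfl fun j _ => ?_
  field_simp

noncomputable def expSubOneDiv (l : ℂ) : PowerSeries ℂ := C l⁻¹ * (expS l - 1)

lemma hasSubst_expSubOneDiv (l : ℂ) : HasSubst (expSubOneDiv l) :=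
  HasSubst.of_constantCoeff_zero' (by simp [expSubOneDiv, constantCoeff_expS])

lemma coeff_expSubOneDiv_pow_of_lt {l : ℂ} {n k : ℕ} (h : n < k) :
    coeff n (expSubOneDiv l ^ k) = 0 :=
  X_pow_dvd_iff.mp (pow_dvd_pow_of_dvd (dvd_mul_of_dvd_right (X_dvd_expS_sub_one l) _) k) n h

section Stirling

variable {S2 : ℕ → ℕ → ℂ}
  (hS2 : ∀ k, (expS 1 - 1) ^ k = (C : ℂ →+* PowerSeries ℂ) (Nat.factorial k) * egf (fun n => S2 n k))
include hS2

lemma coeff_expS_one_sub_one_pow (k n : ℕ) :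
    coeff n ((expS 1 - 1) ^ k) = k.factorial * S2 n k / n.factorial := by
  rw [hS2 k, coeff_C_mul, coeff_egf, mul_div_assoc]

lemma stirling_eq_zero_of_lt {n k : ℕ} (h : n < k) : S2 n k = 0 := by
  have hcoeff : coeff n ((expS 1 - 1) ^ k) = 0 :=
    X_pow_dvd_iff.mp (pow_dvd_pow_of_dvd (X_dvd_expS_sub_one 1) k) n h
  rw [coeff_expS_one_sub_one_pow hS2] at hcoeff
  simpa [Nat.factorial_ne_zero] using hcoeff

/-- `e^{mt} = (1 + (e^t - 1))^m`, expanded by the binomial theorem. -/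
lemma sum_descFactorial_mul_stirling {N m : ℕ} (hNm : N ≤ m) :
    ∑ k ∈ Finset.range (N + 1), (m.descFactorial k : ℂ) * S2 N k = (m : ℂ) ^ N := by
  have hbinom := congrArg (coeff N) (add_pow (expS 1 - 1) 1 m)
  rw [sub_add_cancel, expS_one_pow, expS, coeff_egf, map_sum] at hbinom
  simp only [one_pow, mul_one, ← map_natCast (C (R := ℂ)), coeff_mul_C,
    coeff_expS_one_sub_one_pow hS2] at hbinom
  have hN : (N.factorial : ℂ) ≠ 0 := by exact_mod_cast N.factorial_ne_zero
  rw [div_eq_iff hN, Finset.sum_mul] at hbinom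
  rw [hbinom]
  refine (Finset.sum_subset (by simp; omega) fun k _ hk => ?_).trans
    (Finset.sum_congr rfl fun k _ => ?_)
  · simp only [Finset.mem_range, not_lt] at hk
    simp [stirling_eq_zero_of_lt hS2 (by omega : N < k)]
  · rw [Nat.descFactorial_eq_factorial_mul_choose]
    push_cast
    field_simp

/-- Both sides are polynomials in `y` that agree at the infinitely many integers `m ≥ N`. -/
lemma sum_descPochhammer_eval_mul_stirling (y : ℂ) (N : ℕ) :
    ∑ k ∈ Finset.range (N + 1), (descPochhammer ℂ k).eval y * S2 N k = y ^ N := by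
  let P : Polynomial ℂ := ∑ k ∈ Finset.range (N + 1), descPochhammer ℂ k * Polynomial.C (S2 N k)
  have hP : ∀ w, P.eval w = ∑ k ∈ Finset.range (N + 1), (descPochhammer ℂ k).eval w * S2 N k := by
    intro w
    simp [P, Polynomial.eval_finsetSum]
  suffices P = Polynomial.X ^ N by simp [← hP, this]
  apply Polynomial.eq_of_infinite_eval_eq
  refine ((Set.Ici_infinite N).image Nat.cast_injective.injOn).mono ?_
  rintro _ ⟨m, hm, rfl⟩
  simp [hP, descPochhammer_eval_eq_descFactorial, sum_descFactorial_mul_stirling hS2 hm]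

lemma sum_dff_mul_stirling_mul_pow {l : ℂ} (hl : l ≠ 0) (x : ℂ) (N : ℕ) :
    ∑ k ∈ Finset.range (N + 1), dff l x k * S2 N k * l ^ (N - k) = x ^ N := by
  calc ∑ k ∈ Finset.range (N + 1), dff l x k * S2 N k * l ^ (N - k)
      = ∑ k ∈ Finset.range (N + 1), l ^ N * ((descPochhammer ℂ k).eval (x / l) * S2 N k) := by
        refine Finset.sum_congr rfl fun k hk => ?_
        rw [dff_eq_pow_mul_descPochhammer hl,
          ← pow_mul_pow_sub l (Nat.le_of_lt_succ (Finset.mem_range.mp hk))]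
        ring
    _ = x ^ N := by
        rw [← Finset.mul_sum, sum_descPochhammer_eval_mul_stirling hS2, div_pow,
          mul_div_cancel₀ _ (pow_ne_zero N hl)]

lemma coeff_expSubOneDiv_pow {l : ℂ} (hl : l ≠ 0) {n k : ℕ} (h : k ≤ n) :
    coeff n (expSubOneDiv l ^ k) = k.factorial * S2 n k * l ^ (n - k) / n.factorial := by
  rw [expSubOneDiv, mul_pow, ← map_pow, ← rescale_expS_one, ← map_one (rescale l), ← map_sub,
    ← map_pow, coeff_C_mul, coeff_rescale, coeff_expS_one_sub_one_pow hS2, ← pow_mul_pow_sub l h,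
    inv_pow]
  field_simp

lemma coeff_subst_expSubOneDiv_egf {l : ℂ} (hl : l ≠ 0) (f : ℕ → ℂ) (n : ℕ) :
    coeff n ((egf f).subst (expSubOneDiv l)) =
      (∑ k ∈ Finset.range (n + 1), f k * S2 n k * l ^ (n - k)) / n.factorial := by
  rw [coeff_subst' (hasSubst_expSubOneDiv l),
    finsum_eq_sum_of_support_subset (s := Finset.range (n + 1)) _ ?_, Finset.sum_div]
  · refine Finset.sum_congr rfl fun k hk => ?_
    rw [coeff_egf, smul_eq_mul,
      coeff_expSubOneDiv_pow hS2 hl (Nat.le_of_lt_succ (Finset.mem_range.mp hk))]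
    have hkf : (k.factorial : ℂ) ≠ 0 := by exact_mod_cast k.factorial_ne_zero
    field_simp
  · intro k hk
    by_contra hkn
    simp only [Finset.coe_range, Set.mem_Iio, not_lt] at hkn
    exact hk (by simp only [coeff_expSubOneDiv_pow_of_lt (by omega : n < k), smul_zero])

lemma subst_expSubOneDiv_degExp {l : ℂ} (hl : l ≠ 0) (x : ℂ) :
    (degExp l x).subst (expSubOneDiv l) = expS x := by
  ext n
  rw [degExp, coeff_subst_expSubOneDiv_egf hS2 hl, sum_dff_mul_stirling_mul_pow hS2 hl, expS,
    coeff_egf]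

end Stirling

theorem stmt15 (lam : ℝ) (hlam : lam ≠ 0) (z : ℂ) (Ecl Ed : ℕ → ℂ) (S2 : ℕ → ℕ → ℂ)
    (hE : egf Ecl * (expS (1/2) + expS (-(1/2))) = 2 * expS z)
    (hEd : egf Ed * (degExp lam (1/2) + degExp lam (-(1/2))) = 2 * degExp lam z)
    (hS2 : ∀ k, (expS 1 - 1) ^ k = (PowerSeries.C : ℂ →+* PowerSeries ℂ) (Nat.factorial k) * egf (fun n => S2 n k))
    (n : ℕ) :
    Ecl n = ∑ k ∈ Finset.range (n+1), Ed k * S2 n k * (lam:ℂ)^(n-k) := by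
  have hl : (lam : ℂ) ≠ 0 := ofReal_ne_zero.mpr hlam
  have hsubst := congrArg (substAlgHom (hasSubst_expSubOneDiv lam)) hEd
  simp only [map_mul, map_add, map_ofNat, coe_substAlgHom,
    subst_expSubOneDiv_degExp hS2 hl] at hsubst
  have hcosh : expS (1/2) + expS (-(1/2)) ≠ 0 := fun h => by
    simpa [constantCoeff_expS] using congrArg constantCoeff h
  have hEcl : egf Ecl = (egf Ed).subst (expSubOneDiv lam) :=
    mul_right_cancel₀ hcosh (hE.trans hsubst.symm)
  have hcoeff := congrArg (coeff n) hEcl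
  rw [coeff_egf, coeff_subst_expSubOneDiv_egf hS2 hl] at hcoeff
  exact (div_left_inj' (by exact_mod_cast n.factorial_ne_zero)).mp hcoeff
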